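/- arXiv:1308.4022 — 5 statements merged into one kernel-verified Lean document; each statement's English description precedes it below -/
import Mathlib

section
/- Let X₁, X₂ ∈ ℝ^{L×K} be matrices with rank(X₁) = r₁, rank(X₂) = r₂ and rank(X₁ + X₂) = r₁ + r₂ = r. Then there exist symmetric positive semidefinite matrices L ∈ ℝ^{L×L} and R ∈ ℝ^{K×K}, each of rank r, such that X₁ᵀ L X₂ = 0_{K×K} and X₁ R X₂ᵀ = 0_{L×L}; that is, X₁ and X₂ are (L,R) bi-orthogonal (weakly (L,R)-separable). -/
open Matrix Module Submodule

/-- dot product of a vector with itself is nonneg over ℝ -/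
private lemma dot_self_nonneg {n : ℕ} (v : Fin n → ℝ) : 0 ≤ v ⬝ᵥ v :=
  Finset.sum_nonneg fun i _ => mul_self_nonneg (v i)

/-- Key one-sided lemma: there is a psd matrix `Lm` of rank `r₁ + r₂` with
`X₁ᵀ * Lm * X₂ = 0`. -/
private lemma one_sided {Lp Kp r₁ r₂ : ℕ}
    (X₁ X₂ : Matrix (Fin Lp) (Fin Kp) ℝ)
    (h₁ : X₁.rank = r₁) (h₂ : X₂.rank = r₂)
    (hsum : (X₁ + X₂).rank = r₁ + r₂) :
    ∃ Lm : Matrix (Fin Lp) (Fin Lp) ℝ,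
      Lm.PosSemidef ∧ Lm.rank = r₁ + r₂ ∧ X₁ᵀ * Lm * X₂ = 0 := by
  classical
  set U₁ := LinearMap.range X₁.mulVecLin with hU₁def
  set U₂ := LinearMap.range X₂.mulVecLin with hU₂def
  have hf₁ : finrank ℝ U₁ = r₁ := h₁
  have hf₂ : finrank ℝ U₂ = r₂ := h₂
  -- the range of `X₁ + X₂` is contained in `U₁ ⊔ U₂`
  have hle : LinearMap.range (X₁ + X₂).mulVecLin ≤ U₁ ⊔ U₂ := by
    rw [Matrix.mulVecLin_add]
    rintro x ⟨v, rfl⟩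
    exact add_mem_sup (LinearMap.mem_range_self _ v) (LinearMap.mem_range_self _ v)
  have hsup_ge : r₁ + r₂ ≤ finrank ℝ ↥(U₁ ⊔ U₂) := by
    have := Submodule.finrank_mono hle
    rwa [show finrank ℝ ↥(LinearMap.range (X₁ + X₂).mulVecLin) = (X₁ + X₂).rank from rfl,
      hsum] at this
  have hkey := Submodule.finrank_sup_add_finrank_inf_eq U₁ U₂
  rw [hf₁, hf₂] at hkey
  have hsup : finrank ℝ ↥(U₁ ⊔ U₂) = r₁ + r₂ := by omega
  -- a complement of `U₁ ⊔ U₂`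
  obtain ⟨C, hC⟩ := Submodule.exists_isCompl (U₁ ⊔ U₂)
  set c := finrank ℝ C with hcdef
  have htot : finrank ℝ (Fin Lp → ℝ) = Lp := Module.finrank_fin_fun ℝ
  have hLp : r₁ + r₂ + c = Lp := by
    have := Submodule.finrank_add_eq_of_isCompl hC
    rw [hsup, htot] at this
    omega
  -- finrank of `U₂ ⊔ C` and `U₁ ⊔ C`
  have hdisj₁C : Disjoint U₁ C := hC.disjoint.mono_left le_sup_left
  have hdisj₂C : Disjoint U₂ C := hC.disjoint.mono_left le_sup_right
  have hf₂C : finrank ℝ ↥(U₂ ⊔ C) = r₂ + c := by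
    have := Submodule.finrank_sup_add_finrank_inf_eq U₂ C
    rw [hf₂, hdisj₂C.eq_bot, finrank_bot] at this
    omega
  have hf₁C : finrank ℝ ↥(U₁ ⊔ C) = r₁ + c := by
    have := Submodule.finrank_sup_add_finrank_inf_eq U₁ C
    rw [hf₁, hdisj₁C.eq_bot, finrank_bot] at this
    omega
  -- `U₁` is complementary to `U₂ ⊔ C`
  have hsupall₁ : U₁ ⊔ (U₂ ⊔ C) = ⊤ := by
    rw [← sup_assoc]; exact hC.codisjoint.eq_top
  have hsupall₂ : U₂ ⊔ (U₁ ⊔ C) = ⊤ := by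
    rw [← sup_assoc, sup_comm U₂ U₁]; exact hC.codisjoint.eq_top
  have hcompl₁ : IsCompl U₁ (U₂ ⊔ C) := by
    constructor
    · rw [disjoint_iff]
      have := Submodule.finrank_sup_add_finrank_inf_eq U₁ (U₂ ⊔ C)
      rw [hf₁, hf₂C, hsupall₁, finrank_top, htot] at this
      have h0 : finrank ℝ ↥(U₁ ⊓ (U₂ ⊔ C)) = 0 := by omega
      exact Submodule.finrank_eq_zero.mp h0
    · exact codisjoint_iff.mpr hsupall₁
  have hcompl₂ : IsCompl U₂ (U₁ ⊔ C) := by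
    constructor
    · rw [disjoint_iff]
      have := Submodule.finrank_sup_add_finrank_inf_eq U₂ (U₁ ⊔ C)
      rw [hf₂, hf₁C, hsupall₂, finrank_top, htot] at this
      have h0 : finrank ℝ ↥(U₂ ⊓ (U₁ ⊔ C)) = 0 := by omega
      exact Submodule.finrank_eq_zero.mp h0
    · exact codisjoint_iff.mpr hsupall₂
  -- the two projections
  set p₁ : (Fin Lp → ℝ) →ₗ[ℝ] (Fin Lp → ℝ) :=
    U₁.subtype ∘ₗ U₁.projectionOnto (U₂ ⊔ C) hcompl₁ with hp₁def
  set p₂ : (Fin Lp → ℝ) →ₗ[ℝ] (Fin Lp → ℝ) :=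
    U₂.subtype ∘ₗ U₂.projectionOnto (U₁ ⊔ C) hcompl₂ with hp₂def
  have hker₁ : LinearMap.ker p₁ = U₂ ⊔ C := by
    rw [hp₁def, LinearMap.ker_comp, Submodule.ker_subtype, Submodule.comap_bot,
      Submodule.linearProjOfIsCompl_ker]
  have hker₂ : LinearMap.ker p₂ = U₁ ⊔ C := by
    rw [hp₂def, LinearMap.ker_comp, Submodule.ker_subtype, Submodule.comap_bot,
      Submodule.linearProjOfIsCompl_ker]
  set N₁ : Matrix (Fin Lp) (Fin Lp) ℝ := LinearMap.toMatrix' p₁ with hN₁def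
  set N₂ : Matrix (Fin Lp) (Fin Lp) ℝ := LinearMap.toMatrix' p₂ with hN₂def
  have hN₁ : N₁.mulVecLin = p₁ := by
    rw [hN₁def, ← Matrix.toLin'_apply', Matrix.toLin'_toMatrix']
  have hN₂ : N₂.mulVecLin = p₂ := by
    rw [hN₂def, ← Matrix.toLin'_apply', Matrix.toLin'_toMatrix']
  -- `N₁ * X₂ = 0` and `N₂ * X₁ = 0`
  have hN₁X₂ : N₁ * X₂ = 0 := by
    apply Matrix.toLin'.injective
    rw [Matrix.toLin'_apply', Matrix.mulVecLin_mul, hN₁, map_zero]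
    refine LinearMap.ext fun v => ?_
    have hmem : X₂.mulVecLin v ∈ LinearMap.ker p₁ := by
      rw [hker₁]
      exact Submodule.mem_sup_left (LinearMap.mem_range_self _ v)
    simpa [LinearMap.comp_apply] using LinearMap.mem_ker.mp hmem
  have hN₂X₁ : N₂ * X₁ = 0 := by
    apply Matrix.toLin'.injective
    rw [Matrix.toLin'_apply', Matrix.mulVecLin_mul, hN₂, map_zero]
    refine LinearMap.ext fun v => ?_
    have hmem : X₁.mulVecLin v ∈ LinearMap.ker p₂ := by
      rw [hker₂]
      exact Submodule.mem_sup_left (LinearMap.mem_range_self _ v)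
    simpa [LinearMap.comp_apply] using LinearMap.mem_ker.mp hmem
  -- the matrix `Lm`
  refine ⟨N₁ᵀ * N₁ + N₂ᵀ * N₂, ?_, ?_, ?_⟩
  · -- positive semidefiniteness
    have ha := Matrix.posSemidef_conjTranspose_mul_self N₁
    have hb := Matrix.posSemidef_conjTranspose_mul_self N₂
    rw [Matrix.conjTranspose_eq_transpose_of_trivial] at ha hb
    exact ha.add hb
  · -- rank
    have hkerL : LinearMap.ker (N₁ᵀ * N₁ + N₂ᵀ * N₂).mulVecLin = (U₂ ⊔ C) ⊓ (U₁ ⊔ C) := by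
      ext x
      rw [LinearMap.mem_ker, Matrix.mulVecLin_apply]
      constructor
      · intro hx
        have hdot : x ⬝ᵥ ((N₁ᵀ * N₁ + N₂ᵀ * N₂) *ᵥ x) = 0 := by
          rw [hx, dotProduct_zero]
        have hexp : x ⬝ᵥ ((N₁ᵀ * N₁ + N₂ᵀ * N₂) *ᵥ x)
            = (N₁ *ᵥ x) ⬝ᵥ (N₁ *ᵥ x) + (N₂ *ᵥ x) ⬝ᵥ (N₂ *ᵥ x) := by
          rw [Matrix.add_mulVec, dotProduct_add, ← Matrix.mulVec_mulVec,
            ← Matrix.mulVec_mulVec, Matrix.dotProduct_mulVec x N₁ᵀ,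
            Matrix.dotProduct_mulVec x N₂ᵀ, Matrix.vecMul_transpose,
            Matrix.vecMul_transpose]
        rw [hexp] at hdot
        obtain ⟨e1, e2⟩ := (add_eq_zero_iff_of_nonneg
          (dot_self_nonneg _) (dot_self_nonneg _)).mp hdot
        have hv1 : N₁ *ᵥ x = 0 := dotProduct_self_eq_zero.mp e1
        have hv2 : N₂ *ᵥ x = 0 := dotProduct_self_eq_zero.mp e2
        have hx1 : x ∈ U₂ ⊔ C := by
          rw [← hker₁, LinearMap.mem_ker, ← hN₁, Matrix.mulVecLin_apply]
          exact hv1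
        have hx2 : x ∈ U₁ ⊔ C := by
          rw [← hker₂, LinearMap.mem_ker, ← hN₂, Matrix.mulVecLin_apply]
          exact hv2
        exact ⟨hx1, hx2⟩
      · rintro ⟨hx1, hx2⟩
        have hv1 : N₁ *ᵥ x = 0 := by
          have : x ∈ LinearMap.ker p₁ := hker₁ ▸ hx1
          rw [← Matrix.mulVecLin_apply, hN₁]
          exact LinearMap.mem_ker.mp this
        have hv2 : N₂ *ᵥ x = 0 := by
          have : x ∈ LinearMap.ker p₂ := hker₂ ▸ hx2
          rw [← Matrix.mulVecLin_apply, hN₂]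
          exact LinearMap.mem_ker.mp this
        rw [Matrix.add_mulVec, ← Matrix.mulVec_mulVec, ← Matrix.mulVec_mulVec,
          hv1, hv2, Matrix.mulVec_zero, Matrix.mulVec_zero, add_zero]
    -- rank-nullity
    have hrn := LinearMap.finrank_range_add_finrank_ker (N₁ᵀ * N₁ + N₂ᵀ * N₂).mulVecLin
    rw [hkerL, htot] at hrn
    have hinf : finrank ℝ ↥((U₂ ⊔ C) ⊓ (U₁ ⊔ C)) = c := by
      have := Submodule.finrank_sup_add_finrank_inf_eq (U₂ ⊔ C) (U₁ ⊔ C)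
      have hsupC : (U₂ ⊔ C) ⊔ (U₁ ⊔ C) = ⊤ := by
        rw [sup_assoc, sup_comm C (U₁ ⊔ C), sup_assoc, sup_idem, ← sup_assoc,
          sup_comm U₂ U₁]
        exact hC.codisjoint.eq_top
      rw [hf₂C, hf₁C, hsupC, finrank_top, htot] at this
      omega
    rw [hinf] at hrn
    show finrank ℝ ↥(LinearMap.range (N₁ᵀ * N₁ + N₂ᵀ * N₂).mulVecLin) = r₁ + r₂
    omega
  · -- orthogonality
    rw [Matrix.mul_add, Matrix.add_mul]
    have e1 : X₁ᵀ * (N₁ᵀ * N₁) * X₂ = 0 := by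
      rw [Matrix.mul_assoc, Matrix.mul_assoc, hN₁X₂, Matrix.mul_zero, Matrix.mul_zero]
    have e2 : X₁ᵀ * (N₂ᵀ * N₂) * X₂ = 0 := by
      rw [← Matrix.mul_assoc, ← Matrix.transpose_mul, hN₂X₁, Matrix.transpose_zero,
        Matrix.zero_mul, Matrix.zero_mul]
    rw [e1, e2, add_zero]

/-- Theorem 1 of the paper (weak part): if the ranks of `X₁` and `X₂` add up,
there exist symmetric positive semidefinite matrices `Lm`, `R` of rank `r₁ + r₂`
making `X₁` and `X₂` (L,R) bi-orthogonal (weakly (L,R)-separable). -/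
theorem weak_LR_separability (Lp Kp r₁ r₂ : ℕ)
    (X₁ X₂ : Matrix (Fin Lp) (Fin Kp) ℝ)
    (h₁ : X₁.rank = r₁) (h₂ : X₂.rank = r₂)
    (hsum : (X₁ + X₂).rank = r₁ + r₂) :
    ∃ (Lm : Matrix (Fin Lp) (Fin Lp) ℝ) (R : Matrix (Fin Kp) (Fin Kp) ℝ),
      Lm.PosSemidef ∧ R.PosSemidef ∧
      Lm.rank = r₁ + r₂ ∧ R.rank = r₁ + r₂ ∧
      X₁ᵀ * Lm * X₂ = 0 ∧ X₁ * R * X₂ᵀ = 0 := by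
  obtain ⟨Lm, hLpsd, hLrank, hLorth⟩ := one_sided X₁ X₂ h₁ h₂ hsum
  have h₁' : X₁ᵀ.rank = r₁ := by rw [Matrix.rank_transpose, h₁]
  have h₂' : X₂ᵀ.rank = r₂ := by rw [Matrix.rank_transpose, h₂]
  have hsum' : (X₁ᵀ + X₂ᵀ).rank = r₁ + r₂ := by
    rw [← Matrix.transpose_add, Matrix.rank_transpose, hsum]
  obtain ⟨R, hRpsd, hRrank, hRorth⟩ := one_sided X₁ᵀ X₂ᵀ h₁' h₂' hsum'
  rw [Matrix.transpose_transpose] at hRorth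
  exact ⟨Lm, R, hLpsd, hRpsd, hLrank, hRrank, hLorth, hRorth⟩
end

section
/- Let X₁, X₂ ∈ ℝ^{L×K} be matrices with rank(X₁) = r₁, rank(X₂) = r₂ and rank(X₁ + X₂) = r₁ + r₂ = r. Then there exist symmetric positive semidefinite matrices L ∈ ℝ^{L×L} and R ∈ ℝ^{K×K} of rank r, an L-orthonormal family P₁,…,P_r ∈ ℝ^L, an R-orthonormal family Q₁,…,Q_r ∈ ℝ^K, and positive reals σ₁,…,σ_r such that X₁ = Σ_{i=1}^{r₁} σ_i P_i Q_iᵀ, X₂ = Σ_{i=r₁+1}^{r} σ_i P_i Q_iᵀ, and σ_i ≠ σ_j whenever i ≤ r₁ < j (the sets of singular values of the two components in the (L,R)-SVD are disjoint); that is, X₁ and X₂ are strongly (L,R)-separable. -/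
/-!
Write `X₁` and `X₂` as sums of `r₁` and `r₂` rank-one terms `pᵢ qᵢᵀ`. Rank additivity says the
concatenated sum has rank `r₁ + r₂`, which forces both concatenated families `p` and `q` to be
linearly independent. A linearly independent family `v` (the rows of `V`) is `A`-orthonormal for
the positive semidefinite `A = WᵀW`, `W = (VVᵀ)⁻¹V`, whose rank is the size of the family.
Since nonzero weights `σᵢ` can be absorbed into the `qᵢ`, we may take `σ = 1` on the first block
and `σ = 2` on the second.
-/

open Matrix

namespace Matrix

variable {K m n ι : Type*}

theorem linearIndependent_row_iff_rank_eq_card [Field K] [Fintype m] [Fintype n]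
    (A : Matrix m n K) : LinearIndependent K A.row ↔ A.rank = Fintype.card m := by
  rw [linearIndependent_iff_card_eq_finrank_span, rank_eq_finrank_span_row, eq_comm]
  rfl

theorem sum_vecMulVec_eq_transpose_mul [NonUnitalNonAssocSemiring K] [Fintype ι]
    (p : ι → m → K) (q : ι → n → K) :
    ∑ i, vecMulVec (p i) (q i) = (of p)ᵀ * of q := by
  ext a b
  simp [mul_apply, vecMulVec_apply, sum_apply]

theorem exists_eq_sum_vecMulVec_of_rank_eq [Field K] [Fintype n] (A : Matrix m n K) {r : ℕ}
    (h : A.rank = r) : ∃ (p : Fin r → m → K) (q : Fin r → n → K),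
      A = ∑ i, vecMulVec (p i) (q i) := by
  have : Module.Finite K (Submodule.span K (Set.range A.col)) :=
    FiniteDimensional.span_of_finite K (Set.finite_range _)
  let b : Module.Basis (Fin r) K (Submodule.span K (Set.range A.col)) :=
    Module.finBasisOfFinrankEq K _ (by rw [← rank_eq_finrank_span_cols, h])
  let coord (j : n) : Fin r → K := b.repr ⟨A.col j, Submodule.subset_span ⟨j, rfl⟩⟩
  refine ⟨fun i => b i, fun i j => coord j i, ?_⟩
  ext a j
  have hcol := congrArg (fun v : Submodule.span K (Set.range A.col) => (v : m → K) a)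
    (b.sum_repr ⟨A.col j, Submodule.subset_span ⟨j, rfl⟩⟩)
  simp only [Submodule.coe_sum, Submodule.coe_smul, Finset.sum_apply, Pi.smul_apply,
    smul_eq_mul, col_apply] at hcol
  simp only [sum_apply, vecMulVec_apply, ← hcol, mul_comm]
  rfl

theorem linearIndependent_of_rank_sum_vecMulVec_eq_card [Field K] [Fintype ι] [Fintype m]
    [Fintype n] {p : ι → m → K} {q : ι → n → K}
    (h : (∑ i, vecMulVec (p i) (q i)).rank = Fintype.card ι) :
    LinearIndependent K p ∧ LinearIndependent K q := by
  rw [sum_vecMulVec_eq_transpose_mul] at h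
  have hp := (rank_mul_le_left (of p)ᵀ (of q)).trans_eq (rank_transpose (of p))
  have hq := rank_mul_le_right (of p)ᵀ (of q)
  exact ⟨(linearIndependent_row_iff_rank_eq_card (of p)).2
      (le_antisymm (rank_le_card_height _) (h ▸ hp)),
    (linearIndependent_row_iff_rank_eq_card (of q)).2
      (le_antisymm (rank_le_card_height _) (h ▸ hq))⟩

def AOrthonormal [Fintype m] [DecidableEq ι] (A : Matrix m m ℝ) (v : ι → m → ℝ) : Prop :=
  ∀ i j, v i ⬝ᵥ (A *ᵥ v j) = if i = j then 1 else 0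

theorem aOrthonormal_iff_mul_mul_transpose_eq_one [Fintype m] [DecidableEq ι]
    (A : Matrix m m ℝ) (v : ι → m → ℝ) : AOrthonormal A v ↔ of v * A * (of v)ᵀ = 1 := by
  rw [← Matrix.ext_iff]
  refine forall₂_congr fun i j => ?_
  rw [one_apply, Matrix.mul_assoc]
  rfl

theorem exists_posSemidef_rank_eq_aOrthonormal [Fintype ι] [DecidableEq ι] [Fintype m]
    {v : ι → m → ℝ} (hv : LinearIndependent ℝ v) :
    ∃ A : Matrix m m ℝ, A.PosSemidef ∧ A.rank = Fintype.card ι ∧ AOrthonormal A v := by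
  set V := of v
  have hV : V.rank = Fintype.card ι := (linearIndependent_row_iff_rank_eq_card V).1 hv
  have hG : IsUnit (V * Vᵀ) := by
    rw [← linearIndependent_rows_iff_isUnit, linearIndependent_row_iff_rank_eq_card,
      rank_self_mul_transpose, hV]
  set W := (V * Vᵀ)⁻¹ * V
  have hVW : V * Wᵀ = 1 := by
    rw [transpose_mul, transpose_nonsing_inv, transpose_mul, transpose_transpose,
      ← Matrix.mul_assoc, mul_nonsing_inv _ ((isUnit_iff_isUnit_det _).1 hG)]
  refine ⟨Wᵀ * W, ?_, ?_, ?_⟩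
  · simpa using posSemidef_conjTranspose_mul_self W
  · rw [rank_transpose_mul_self, rank_mul_eq_right_of_isUnit_det _ _
      (isUnit_nonsing_inv_det _ ((isUnit_iff_isUnit_det _).1 hG)), hV]
  · rw [aOrthonormal_iff_mul_mul_transpose_eq_one, ← Matrix.mul_assoc, hVW, Matrix.one_mul]
    simpa using congrArg transpose hVW

theorem exists_LR_orthonormal_of_rank_sum_vecMulVec_eq_card [Fintype ι] [DecidableEq ι]
    [Fintype m] [Fintype n] {p : ι → m → ℝ} {q : ι → n → ℝ} {σ : ι → ℝ} (hσ : ∀ i, σ i ≠ 0)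
    (h : (∑ i, vecMulVec (p i) (q i)).rank = Fintype.card ι) :
    ∃ (L : Matrix m m ℝ) (R : Matrix n n ℝ), L.PosSemidef ∧ R.PosSemidef ∧
      L.rank = Fintype.card ι ∧ R.rank = Fintype.card ι ∧
      AOrthonormal L p ∧ AOrthonormal R (fun i => (σ i)⁻¹ • q i) := by
  obtain ⟨hp, hq⟩ := linearIndependent_of_rank_sum_vecMulVec_eq_card h
  obtain ⟨L, hL, hLr, hLp⟩ := exists_posSemidef_rank_eq_aOrthonormal hp
  obtain ⟨R, hR, hRr, hRq⟩ := exists_posSemidef_rank_eq_aOrthonormal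
    (hq.units_smul fun i => (Units.mk0 (σ i) (hσ i))⁻¹)
  exact ⟨L, R, hL, hR, hLr, hRr, hLp, hRq⟩

end Matrix

theorem Fin.sum_filter_lt_eq_sum_castAdd {M : Type*} [AddCommMonoid M] {m n : ℕ}
    (f : Fin (m + n) → M) :
    ∑ i ∈ Finset.univ.filter (fun i : Fin (m + n) => (i : ℕ) < m), f i =
      ∑ i : Fin m, f (Fin.castAdd n i) := by
  simp [Finset.sum_filter, Fin.sum_univ_add]

theorem Fin.sum_filter_le_eq_sum_natAdd {M : Type*} [AddCommMonoid M] {m n : ℕ}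
    (f : Fin (m + n) → M) :
    ∑ i ∈ Finset.univ.filter (fun i : Fin (m + n) => m ≤ (i : ℕ)), f i =
      ∑ i : Fin n, f (Fin.natAdd m i) := by
  simp [Finset.sum_filter, Fin.sum_univ_add, fun i : Fin m => not_le.2 i.is_lt]

/-- Theorem 1 of the paper (strong part): under rank additivity, there exist
symmetric positive semidefinite `Lm`, `R` of rank `r = r₁ + r₂`, an
`Lm`-orthonormal family `P`, an `R`-orthonormal family `Q` and positive
`σ` such that `X₁` is the sum of the first `r₁` elementary terms, `X₂` is the
sum of the remaining `r₂` ones, and the two sets of values `σ` are disjoint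
(strong (L,R)-separability). -/
theorem strong_LR_separability (Lp Kp r₁ r₂ : ℕ)
    (X₁ X₂ : Matrix (Fin Lp) (Fin Kp) ℝ)
    (h₁ : X₁.rank = r₁) (h₂ : X₂.rank = r₂)
    (hsum : (X₁ + X₂).rank = r₁ + r₂) :
    ∃ (Lm : Matrix (Fin Lp) (Fin Lp) ℝ) (R : Matrix (Fin Kp) (Fin Kp) ℝ)
      (P : Fin (r₁ + r₂) → Fin Lp → ℝ) (Q : Fin (r₁ + r₂) → Fin Kp → ℝ)
      (σ : Fin (r₁ + r₂) → ℝ),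
      Lm.PosSemidef ∧ R.PosSemidef ∧
      Lm.rank = r₁ + r₂ ∧ R.rank = r₁ + r₂ ∧
      (∀ i j, P i ⬝ᵥ (Lm *ᵥ P j) = if i = j then (1 : ℝ) else 0) ∧
      (∀ i j, Q i ⬝ᵥ (R *ᵥ Q j) = if i = j then (1 : ℝ) else 0) ∧
      (∀ i, 0 < σ i) ∧
      X₁ = ∑ i ∈ Finset.univ.filter (fun i : Fin (r₁ + r₂) => (i : ℕ) < r₁),
        σ i • vecMulVec (P i) (Q i) ∧
      X₂ = ∑ i ∈ Finset.univ.filter (fun i : Fin (r₁ + r₂) => r₁ ≤ (i : ℕ)),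
        σ i • vecMulVec (P i) (Q i) ∧
      (∀ i j : Fin (r₁ + r₂), (i : ℕ) < r₁ → r₁ ≤ (j : ℕ) → σ i ≠ σ j) := by
  obtain ⟨p₁, q₁, rfl⟩ := exists_eq_sum_vecMulVec_of_rank_eq X₁ h₁
  obtain ⟨p₂, q₂, rfl⟩ := exists_eq_sum_vecMulVec_of_rank_eq X₂ h₂
  set p := Fin.append p₁ p₂
  set q := Fin.append q₁ q₂
  set σ : Fin (r₁ + r₂) → ℝ := fun i => if (i : ℕ) < r₁ then 1 else 2
  have hσ : ∀ i, 0 < σ i := fun i => by dsimp only [σ]; split_ifs <;> norm_num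
  have hpq : (∑ i, vecMulVec (p₁ i) (q₁ i)) + ∑ i, vecMulVec (p₂ i) (q₂ i) =
      ∑ i, vecMulVec (p i) (q i) := by
    simp [Fin.sum_univ_add, p, q]
  obtain ⟨L, R, hL, hR, hLr, hRr, hp, hq⟩ :=
    exists_LR_orthonormal_of_rank_sum_vecMulVec_eq_card (σ := σ) (fun i => (hσ i).ne')
      (by rw [← hpq, hsum, Fintype.card_fin])
  have hterm (i) : σ i • vecMulVec (p i) ((σ i)⁻¹ • q i) = vecMulVec (p i) (q i) := by
    rw [vecMulVec_smul, smul_smul, mul_inv_cancel₀ (hσ i).ne', one_smul]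
  refine ⟨L, R, p, fun i => (σ i)⁻¹ • q i, σ, hL, hR, by simpa using hLr, by simpa using hRr,
    hp, hq, hσ, ?_, ?_, fun i j hi hj => ?_⟩
  · rw [Fin.sum_filter_lt_eq_sum_castAdd]
    simp only [hterm]
    simp only [p, q, Fin.append_left]
  · rw [Fin.sum_filter_le_eq_sum_natAdd]
    simp only [hterm]
    simp only [p, q, Fin.append_right]
  · simp [σ, hi, not_lt.2 hj]
end

section
/- Let O_L ∈ ℝ^{r×L} and O_R ∈ ℝ^{r×K} have full row rank r, and let Y ∈ ℝ^{L×K} have rank r with column space contained in the column space of O_Lᵀ and row space contained in the column space of O_Rᵀ. Suppose O_L Y O_Rᵀ = Σ_{i=1}^r √λ_i U_i V_iᵀ is a singular value decomposition (λ_i > 0, {U_i} orthonormal in ℝ^r, {V_i} orthonormal in ℝ^r). Put σ_i = √λ_i, P_i = O_L^† U_i and Q_i = O_R^† V_i. Then Y = Σ_{i=1}^r σ_i P_i Q_iᵀ, the family {P_i} is L-orthonormal for L = O_Lᵀ O_L, and the family {Q_i} is R-orthonormal for R = O_Rᵀ O_R; that is, this decomposition is the (L,R)-SVD of Y. -/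
open Matrix

private lemma mat_ext_of_mulVec {m n : ℕ} (A B : Matrix (Fin m) (Fin n) ℝ)
    (h : ∀ v, A *ᵥ v = B *ᵥ v) : A = B := by
  ext i j
  have := congrFun (h (Pi.single j 1)) i
  simpa using this

private lemma surj_of_rank {r n : ℕ} (A : Matrix (Fin r) (Fin n) ℝ)
    (h : A.rank = r) : ∀ x : Fin r → ℝ, ∃ v, A *ᵥ v = x := by
  have htop : LinearMap.range A.mulVecLin = ⊤ := by
    apply Submodule.eq_top_of_finrank_eq
    rw [← Matrix.rank, h]
    simp
  intro x
  have : x ∈ LinearMap.range A.mulVecLin := htop ▸ Submodule.mem_top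
  obtain ⟨v, hv⟩ := this
  exact ⟨v, hv⟩

private lemma sandwich {a b r : ℕ} (A : Matrix (Fin a) (Fin r) ℝ)
    (B : Matrix (Fin b) (Fin r) ℝ) (u v : Fin r → ℝ) :
    A * vecMulVec u v * Bᵀ = vecMulVec (A *ᵥ u) (B *ᵥ v) := by
  ext i j
  simp only [Matrix.mul_apply, vecMulVec_apply, transpose_apply, mulVec, dotProduct]
  rw [Finset.sum_mul_sum, Finset.sum_comm]
  refine Finset.sum_congr rfl fun l _ => ?_
  rw [Finset.sum_mul]
  exact Finset.sum_congr rfl fun k _ => by ring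

/-- Proposition 3 of the paper: from the ordinary SVD
`O_L Y O_Rᵀ = ∑ √λᵢ Uᵢ Vᵢᵀ` one obtains the (L,R)-SVD of `Y` via
`σᵢ = √λᵢ`, `Pᵢ = O_L† Uᵢ`, `Qᵢ = O_R† Vᵢ` (pseudoinverses characterized
by the four Penrose conditions): `Y = ∑ σᵢ Pᵢ Qᵢᵀ` with `{Pᵢ}`
`L`-orthonormal for `L = O_Lᵀ O_L` and `{Qᵢ}` `R`-orthonormal for
`R = O_Rᵀ O_R`. -/
theorem LR_SVD_from_SVD (Lp Kp r : ℕ)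
    (OL : Matrix (Fin r) (Fin Lp) ℝ) (OR : Matrix (Fin r) (Fin Kp) ℝ)
    (hOL : OL.rank = r) (hOR : OR.rank = r)
    (Y : Matrix (Fin Lp) (Fin Kp) ℝ) (hY : Y.rank = r)
    (hcol : LinearMap.range Y.mulVecLin ≤ LinearMap.range (OLᵀ).mulVecLin)
    (hrow : LinearMap.range (Yᵀ).mulVecLin ≤ LinearMap.range (ORᵀ).mulVecLin)
    (lam : Fin r → ℝ) (hlam : ∀ i, 0 < lam i)
    (U V : Fin r → Fin r → ℝ)
    (hU : ∀ i j, U i ⬝ᵥ U j = if i = j then (1 : ℝ) else 0)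
    (hV : ∀ i j, V i ⬝ᵥ V j = if i = j then (1 : ℝ) else 0)
    (hsvd : OL * Y * ORᵀ = ∑ i, Real.sqrt (lam i) • vecMulVec (U i) (V i))
    (OLd : Matrix (Fin Lp) (Fin r) ℝ)
    (hOLd1 : OL * OLd * OL = OL) (hOLd2 : OLd * OL * OLd = OLd)
    (hOLd3 : (OL * OLd)ᵀ = OL * OLd) (hOLd4 : (OLd * OL)ᵀ = OLd * OL)
    (ORd : Matrix (Fin Kp) (Fin r) ℝ)
    (hORd1 : OR * ORd * OR = OR) (hORd2 : ORd * OR * ORd = ORd)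
    (hORd3 : (OR * ORd)ᵀ = OR * ORd) (hORd4 : (ORd * OR)ᵀ = ORd * OR)
    (σ : Fin r → ℝ) (hσ : ∀ i, σ i = Real.sqrt (lam i))
    (P : Fin r → Fin Lp → ℝ) (hP : ∀ i, P i = OLd *ᵥ U i)
    (Q : Fin r → Fin Kp → ℝ) (hQ : ∀ i, Q i = ORd *ᵥ V i) :
    Y = ∑ i, σ i • vecMulVec (P i) (Q i) ∧
    (∀ i j, P i ⬝ᵥ ((OLᵀ * OL) *ᵥ P j) = if i = j then (1 : ℝ) else 0) ∧
    (∀ i j, Q i ⬝ᵥ ((ORᵀ * OR) *ᵥ Q j) = if i = j then (1 : ℝ) else 0) := by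
  -- OL * OLd = 1 and OR * ORd = 1
  have hOLone : OL * OLd = 1 := by
    apply mat_ext_of_mulVec
    intro x
    obtain ⟨v, hv⟩ := surj_of_rank OL hOL x
    rw [← hv, mulVec_mulVec, hOLd1]
    simp
  have hORone : OR * ORd = 1 := by
    apply mat_ext_of_mulVec
    intro x
    obtain ⟨v, hv⟩ := surj_of_rank OR hOR x
    rw [← hv, mulVec_mulVec, hORd1]
    simp
  -- (OLd * OL) * OLᵀ = OLᵀ
  have hLproj : (OLd * OL) * OLᵀ = OLᵀ := by
    have : ((OLd * OL) * OLᵀ)ᵀ = OLᵀᵀ := by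
      rw [Matrix.transpose_mul, hOLd4, transpose_transpose, ← Matrix.mul_assoc, hOLd1]
    have := congrArg Matrix.transpose this
    simpa using this
  have hRproj : (ORd * OR) * ORᵀ = ORᵀ := by
    have : ((ORd * OR) * ORᵀ)ᵀ = ORᵀᵀ := by
      rw [Matrix.transpose_mul, hORd4, transpose_transpose, ← Matrix.mul_assoc, hORd1]
    have := congrArg Matrix.transpose this
    simpa using this
  -- OLd * OL * Y = Y
  have hYL : OLd * OL * Y = Y := by
    apply mat_ext_of_mulVec
    intro x
    obtain ⟨w, hw⟩ := hcol ⟨x, rfl⟩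
    simp only [mulVecLin_apply] at hw
    rw [← mulVec_mulVec, ← hw, mulVec_mulVec, hLproj]
  have hYR : (ORd * OR) * Yᵀ = Yᵀ := by
    apply mat_ext_of_mulVec
    intro x
    obtain ⟨w, hw⟩ := hrow ⟨x, rfl⟩
    simp only [mulVecLin_apply] at hw
    rw [← mulVec_mulVec, ← hw, mulVec_mulVec, hRproj]
  have hYR' : Y * (ORd * OR)ᵀ = Y := by
    have := congrArg Matrix.transpose hYR
    simpa [Matrix.transpose_mul] using this
  refine ⟨?_, ?_, ?_⟩
  · -- decomposition
    have key : Y = OLd * (OL * Y * ORᵀ) * ORdᵀ := by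
      calc Y = (OLd * OL * Y) * (ORd * OR)ᵀ := by rw [hYL, hYR']
        _ = OLd * (OL * Y * ORᵀ) * ORdᵀ := by
            rw [Matrix.transpose_mul]
            simp only [Matrix.mul_assoc]
    rw [key, hsvd, Matrix.mul_sum, Matrix.sum_mul]
    apply Finset.sum_congr rfl
    intro i _
    rw [Matrix.mul_smul, Matrix.smul_mul, hσ, hP, hQ, sandwich]
  · intro i j
    have : OL *ᵥ P i = U i := by
      rw [hP, mulVec_mulVec, hOLone, one_mulVec]
    have hj : OL *ᵥ P j = U j := by
      rw [hP, mulVec_mulVec, hOLone, one_mulVec]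
    rw [← hU i j, ← this, ← hj]
    rw [← mulVec_mulVec, dotProduct_mulVec, vecMul_transpose, dotProduct_mulVec,
      ← dotProduct_mulVec]
  · intro i j
    have hi : OR *ᵥ Q i = V i := by
      rw [hQ, mulVec_mulVec, hORone, one_mulVec]
    have hj : OR *ᵥ Q j = V j := by
      rw [hQ, mulVec_mulVec, hORone, one_mulVec]
    rw [← hV i j, ← hi, ← hj]
    rw [← mulVec_mulVec, dotProduct_mulVec, vecMul_transpose, dotProduct_mulVec,
      ← dotProduct_mulVec]
end

section
/- Let P₁,…,P_r ∈ ℝ^L and Q₁,…,Q_r ∈ ℝ^K each be linearly independent families, σ_i > 0, and Y = Σ_{i=1}^r σ_i P_i Q_iᵀ. For arbitrary positive reals μ_i, ν_i define σ̃_i = σ_i/(μ_i ν_i), P̃_i = μ_i P_i, Q̃_i = ν_i Q_i, P̃ = [P̃₁:…:P̃_r], Q̃ = [Q̃₁:…:Q̃_r], L̃ = (P̃^†)ᵀ P̃^† and R̃ = (Q̃^†)ᵀ Q̃^†. Then Y = Σ_{i=1}^r σ̃_i P̃_i Q̃_iᵀ, the family {P̃_i} is L̃-orthonormal and the family {Q̃_i}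 is R̃-orthonormal; thus the rescaled decomposition is an (L̃,R̃)-SVD of Y with prescribed values σ̃_i. -/
/-!
Since the columns of `P̃` are linearly independent, `P̃ P̃† P̃ = P̃` forces `P̃† P̃ = I`, so
`P̃ᵢᵀ L̃ P̃ⱼ = (P̃† P̃ᵢ)ᵀ (P̃† P̃ⱼ) = eᵢᵀ eⱼ = δᵢⱼ`; likewise for `Q̃`. Rescaling keeps the columns
independent, and the scalars in `σ̃ᵢ P̃ᵢ Q̃ᵢᵀ` cancel.
-/

open Matrix

namespace Matrix

variable {m n R : Type*} [Fintype m] [Fintype n] [DecidableEq n] [CommRing R]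
  {M : Matrix m n R} {D : Matrix n m R}

theorem mulVec_col_eq_single_of_mul_mul_self (hM : LinearIndependent R M.col)
    (h : M * D * M = M) (j : n) : D *ᵥ M.col j = Pi.single j 1 :=
  mulVec_injective_iff.mpr hM <| by
    rw [mulVec_mulVec, ← mulVec_single_one, mulVec_mulVec, h]

theorem col_dotProduct_transpose_mul_mulVec_col (hM : LinearIndependent R M.col)
    (h : M * D * M = M) (i j : n) :
    M.col i ⬝ᵥ ((Dᵀ * D) *ᵥ M.col j) = if i = j then 1 else 0 := by
  rw [← mulVec_mulVec, dotProduct_mulVec, vecMul_transpose,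
    mulVec_col_eq_single_of_mul_mul_self hM h, mulVec_col_eq_single_of_mul_mul_self hM h,
    single_dotProduct, one_mul, Pi.single_apply]

end Matrix

theorem LinearIndependent.smul_of_ne_zero {ι K V : Type*} [Field K] [AddCommGroup V] [Module K V]
    {v : ι → V} (hv : LinearIndependent K v) {c : ι → K} (hc : ∀ i, c i ≠ 0) :
    LinearIndependent K (c • v) :=
  hv.units_smul fun i => Units.mk0 (c i) (hc i)

theorem div_mul_smul_vecMulVec_smul {m n K : Type*} [Field K] {a b : K} (ha : a ≠ 0) (hb : b ≠ 0)
    (s : K) (p : m → K) (q : n → K) :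
    (s / (a * b)) • vecMulVec (a • p) (b • q) = s • vecMulVec p q := by
  rw [smul_vecMulVec, vecMulVec_smul, smul_smul, smul_smul]
  congr 1
  field_simp

theorem rescaled_oblique_SVD_general (Lp Kp r : ℕ)
    (P : Fin r → Fin Lp → ℝ) (Q : Fin r → Fin Kp → ℝ)
    (hPind : LinearIndependent ℝ P) (hQind : LinearIndependent ℝ Q)
    (σ : Fin r → ℝ)
    (Y : Matrix (Fin Lp) (Fin Kp) ℝ)
    (hY : Y = ∑ i, σ i • vecMulVec (P i) (Q i))
    (μ ν : Fin r → ℝ) (hμ : ∀ i, 0 < μ i) (hν : ∀ i, 0 < ν i)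
    (σt : Fin r → ℝ) (hσt : ∀ i, σt i = σ i / (μ i * ν i))
    (Pt : Fin r → Fin Lp → ℝ) (hPt : ∀ i, Pt i = μ i • P i)
    (Qt : Fin r → Fin Kp → ℝ) (hQt : ∀ i, Qt i = ν i • Q i)
    (Ptmat : Matrix (Fin Lp) (Fin r) ℝ) (hPtmat : ∀ m i, Ptmat m i = Pt i m)
    (Qtmat : Matrix (Fin Kp) (Fin r) ℝ) (hQtmat : ∀ m i, Qtmat m i = Qt i m)
    (Ptd : Matrix (Fin r) (Fin Lp) ℝ)
    (hPtd1 : Ptmat * Ptd * Ptmat = Ptmat)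
    (Qtd : Matrix (Fin r) (Fin Kp) ℝ)
    (hQtd1 : Qtmat * Qtd * Qtmat = Qtmat)
    (Lt : Matrix (Fin Lp) (Fin Lp) ℝ) (hLt : Lt = Ptdᵀ * Ptd)
    (Rt : Matrix (Fin Kp) (Fin Kp) ℝ) (hRt : Rt = Qtdᵀ * Qtd) :
    Y = ∑ i, σt i • vecMulVec (Pt i) (Qt i) ∧
    (∀ i j, Pt i ⬝ᵥ (Lt *ᵥ Pt j) = if i = j then (1 : ℝ) else 0) ∧
    (∀ i j, Qt i ⬝ᵥ (Rt *ᵥ Qt j) = if i = j then (1 : ℝ) else 0) := by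
  have hPcol : Ptmat.col = Pt := funext fun i => funext fun m => hPtmat m i
  have hQcol : Qtmat.col = Qt := funext fun i => funext fun m => hQtmat m i
  refine ⟨?_, ?_, ?_⟩
  · rw [hY]
    refine Finset.sum_congr rfl fun i _ => ?_
    rw [hσt, hPt, hQt, div_mul_smul_vecMulVec_smul (hμ i).ne' (hν i).ne']
  · rw [hLt, ← hPcol]
    refine col_dotProduct_transpose_mul_mulVec_col ?_ hPtd1
    rw [hPcol, show Pt = μ • P from funext hPt]
    exact hPind.smul_of_ne_zero fun i => (hμ i).ne'
  · rw [hRt, ← hQcol]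
    refine col_dotProduct_transpose_mul_mulVec_col ?_ hQtd1
    rw [hQcol, show Qt = ν • Q from funext hQt]
    exact hQind.smul_of_ne_zero fun i => (hν i).ne'

/-- Proposition 4 of the paper: rescaling the factors of an oblique SVD
`Y = ∑ σᵢ Pᵢ Qᵢᵀ` by positive `μᵢ`, `νᵢ` gives `Y = ∑ σ̃ᵢ P̃ᵢ Q̃ᵢᵀ` with
`σ̃ᵢ = σᵢ/(μᵢνᵢ)`, `P̃ᵢ = μᵢPᵢ`, `Q̃ᵢ = νᵢQᵢ`, and this is an
`(L̃,R̃)`-SVD for `L̃ = (P̃†)ᵀP̃†`, `R̃ = (Q̃†)ᵀQ̃†` (pseudoinverses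
characterized by the four Penrose conditions): the rescaled families are
`L̃`- resp. `R̃`-orthonormal. -/
theorem rescaled_oblique_SVD (Lp Kp r : ℕ)
    (P : Fin r → Fin Lp → ℝ) (Q : Fin r → Fin Kp → ℝ)
    (hPind : LinearIndependent ℝ P) (hQind : LinearIndependent ℝ Q)
    (σ : Fin r → ℝ) (hσ : ∀ i, 0 < σ i)
    (Y : Matrix (Fin Lp) (Fin Kp) ℝ)
    (hY : Y = ∑ i, σ i • vecMulVec (P i) (Q i))
    (μ ν : Fin r → ℝ) (hμ : ∀ i, 0 < μ i) (hν : ∀ i, 0 < ν i)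
    (σt : Fin r → ℝ) (hσt : ∀ i, σt i = σ i / (μ i * ν i))
    (Pt : Fin r → Fin Lp → ℝ) (hPt : ∀ i, Pt i = μ i • P i)
    (Qt : Fin r → Fin Kp → ℝ) (hQt : ∀ i, Qt i = ν i • Q i)
    (Ptmat : Matrix (Fin Lp) (Fin r) ℝ) (hPtmat : ∀ m i, Ptmat m i = Pt i m)
    (Qtmat : Matrix (Fin Kp) (Fin r) ℝ) (hQtmat : ∀ m i, Qtmat m i = Qt i m)
    (Ptd : Matrix (Fin r) (Fin Lp) ℝ)
    (hPtd1 : Ptmat * Ptd * Ptmat = Ptmat) (hPtd2 : Ptd * Ptmat * Ptd = Ptd)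
    (hPtd3 : (Ptmat * Ptd)ᵀ = Ptmat * Ptd) (hPtd4 : (Ptd * Ptmat)ᵀ = Ptd * Ptmat)
    (Qtd : Matrix (Fin r) (Fin Kp) ℝ)
    (hQtd1 : Qtmat * Qtd * Qtmat = Qtmat) (hQtd2 : Qtd * Qtmat * Qtd = Qtd)
    (hQtd3 : (Qtmat * Qtd)ᵀ = Qtmat * Qtd) (hQtd4 : (Qtd * Qtmat)ᵀ = Qtd * Qtmat)
    (Lt : Matrix (Fin Lp) (Fin Lp) ℝ) (hLt : Lt = Ptdᵀ * Ptd)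
    (Rt : Matrix (Fin Kp) (Fin Kp) ℝ) (hRt : Rt = Qtdᵀ * Qtd) :
    Y = ∑ i, σt i • vecMulVec (Pt i) (Qt i) ∧
    (∀ i j, Pt i ⬝ᵥ (Lt *ᵥ Pt j) = if i = j then (1 : ℝ) else 0) ∧
    (∀ i j, Qt i ⬝ᵥ (Rt *ᵥ Qt j) = if i = j then (1 : ℝ) else 0) :=
  rescaled_oblique_SVD_general Lp Kp r P Q hPind hQind σ Y hY μ ν hμ hν σt hσt Pt hPt Qt hQt Ptmat
    hPtmat Qtmat hQtmat Ptd hPtd1 Qtd hQtd1 Lt hLt Rt hRt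
end

section
/- Let Y ∈ ℝ^{L×K}, let γ > 0, let F ∈ ℝ^{(K−1)×K} be the difference matrix with F_{i,i} = −1, F_{i,i+1} = 1 and all other entries 0, and let Z = [Y : γ Y Fᵀ] ∈ ℝ^{L×(2K−1)} be the horizontal concatenation of Y and γ·Y Fᵀ (the matrix of column differences of Y, scaled by γ). Then Z Zᵀ = Y R Yᵀ, where R = I_K + γ² Fᵀ F. Consequently the standard inner product of any two columns-space representations satisfies (Z₁,Z₂)_{2K−1} = (Q₁,Q₂)_K + γ²(F Q₁, F Q₂)_{K−1} for corresponding vectors, and the left singular vectors of Z coincide with the left factors of the (L,R)-SVD of Y with L = I_L and R = I_K + γ² Fᵀ F. -/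
open Matrix

section

variable {R m n k : Type*} [CommRing R] [Fintype n] [Fintype k]

theorem fromCols_mul_transpose_fromCols (A : Matrix m n R) (B : Matrix m k R) :
    fromCols A B * (fromCols A B)ᵀ = A * Aᵀ + B * Bᵀ := by
  rw [transpose_fromCols, fromCols_mul_fromRows]

theorem mul_one_add_sq_smul_gram_mul_transpose [DecidableEq n] (Y : Matrix m n R)
    (F : Matrix k n R) (γ : R) :
    Y * (1 + γ ^ 2 • (Fᵀ * F)) * Yᵀ = Y * Yᵀ + γ • (Y * Fᵀ) * (γ • (Y * Fᵀ))ᵀ := by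
  simp only [transpose_smul, transpose_mul, transpose_transpose, Matrix.mul_add, Matrix.add_mul,
    Matrix.one_mul, Matrix.mul_smul, Matrix.smul_mul, smul_smul, Matrix.mul_assoc, sq]

theorem sumElim_smul_mulVec_dotProduct_sumElim (F : Matrix k n R) (γ : R) (q₁ q₂ : n → R) :
    Sum.elim q₁ (γ • (F *ᵥ q₁)) ⬝ᵥ Sum.elim q₂ (γ • (F *ᵥ q₂))
      = q₁ ⬝ᵥ q₂ + γ ^ 2 * ((F *ᵥ q₁) ⬝ᵥ (F *ᵥ q₂)) := by
  rw [sumElim_dotProduct_sumElim, smul_dotProduct, dotProduct_smul, smul_eq_mul, smul_eq_mul,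
    ← mul_assoc, sq]

end

theorem derivSSA_as_oblique_general (Lp K : ℕ) (γ : ℝ)
    (Y : Matrix (Fin Lp) (Fin (K + 1)) ℝ)
    (F : Matrix (Fin K) (Fin (K + 1)) ℝ)
    (Z : Matrix (Fin Lp) (Fin (K + 1) ⊕ Fin K) ℝ)
    (hZ : Z = Matrix.fromCols Y (γ • (Y * Fᵀ)))
    (R : Matrix (Fin (K + 1)) (Fin (K + 1)) ℝ)
    (hR : R = 1 + γ ^ 2 • (Fᵀ * F)) :
    Z * Zᵀ = Y * R * Yᵀ ∧
    ∀ Q₁ Q₂ : Fin (K + 1) → ℝ,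
      (Sum.elim Q₁ (γ • (F *ᵥ Q₁))) ⬝ᵥ (Sum.elim Q₂ (γ • (F *ᵥ Q₂)))
        = Q₁ ⬝ᵥ Q₂ + γ ^ 2 * ((F *ᵥ Q₁) ⬝ᵥ (F *ᵥ Q₂)) := by
  subst hZ hR
  exact ⟨by rw [fromCols_mul_transpose_fromCols, mul_one_add_sq_smul_gram_mul_transpose],
    sumElim_smul_mulVec_dotProduct_sumElim F γ⟩

/-- Proposition 5 of the paper (DerivSSA as Oblique SSA): for
`Z = [Y : γ Y Fᵀ]`, with `F` the difference matrix, one has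
`Z Zᵀ = Y R Yᵀ` for `R = I + γ² Fᵀ F`; correspondingly, the standard inner
product of the stacked rows satisfies
`(Z₁,Z₂) = (Q₁,Q₂) + γ² (F Q₁, F Q₂)`, so the left singular vectors of `Z`
are the left factors of the (I,R)-SVD of `Y`. -/
theorem derivSSA_as_oblique (Lp K : ℕ) (γ : ℝ) (hγ : 0 < γ)
    (Y : Matrix (Fin Lp) (Fin (K + 1)) ℝ)
    (F : Matrix (Fin K) (Fin (K + 1)) ℝ)
    (hF : ∀ i j, F i j =
      if (j : ℕ) = (i : ℕ) then (-1 : ℝ)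
      else if (j : ℕ) = (i : ℕ) + 1 then 1 else 0)
    (Z : Matrix (Fin Lp) (Fin (K + 1) ⊕ Fin K) ℝ)
    (hZ : Z = Matrix.fromCols Y (γ • (Y * Fᵀ)))
    (R : Matrix (Fin (K + 1)) (Fin (K + 1)) ℝ)
    (hR : R = 1 + γ ^ 2 • (Fᵀ * F)) :
    Z * Zᵀ = Y * R * Yᵀ ∧
    ∀ Q₁ Q₂ : Fin (K + 1) → ℝ,
      (Sum.elim Q₁ (γ • (F *ᵥ Q₁))) ⬝ᵥ (Sum.elim Q₂ (γ • (F *ᵥ Q₂)))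
        = Q₁ ⬝ᵥ Q₂ + γ ^ 2 * ((F *ᵥ Q₁) ⬝ᵥ (F *ᵥ Q₂)) :=
  derivSSA_as_oblique_general Lp K γ Y F Z hZ R hR
end
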